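/- Proposition E.1 (cyclic constancy* and representation with group-specific shocks): Suppose there is an agent i* ∈ 𝒜 such that {i*, j} ∈ 𝒩 for every j ∈ 𝒜∖{i*}. Then the dataset {p^N}_{N∈𝒩} satisfies cyclic constancy* (for every cycle (i_k, j_k, N_k)_{k=1}^K, Σ_{k=1}^K (1+|N_k|)(p_{i_k}^{N_k} − p_{j_k}^{N_k}) = 0) if and only if there exist vectors v_i ∈ ℝ^X for each i ∈ 𝒜 with Σ_{x∈X} v_i(x) = 1 (not required to be nonnegative) and, for each N ∈ 𝒩, a vector O^N ∈ ℝ^X with Σ_{x∈X} O^N(x) = 0, such that for every N ∈ 𝒩 and every i ∈ N, p_i^N = (1/|N|)·v_i + (1/|N|)·Σ_{j∈N∖{i}} p_j^N + O^N. -/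

import Mathlib

/-!
Write `w^N_{ij} = (1 + |N|)(p^N_i - p^N_j)`. Cyclic constancy* says that `w` sums to zero around
every cycle, and this holds as soon as `w^N_{ij} = φ_i - φ_j` for some potential `φ`. Conversely,
the binary groups `{i*, j}` provide the potential `φ_j = w^{{i*, j}}_{j i*}`: close `i → j` in `N`
into the triangle `i → j → i* → i`.

Multiplied by `|N|`, the representation reads `(1 + |N|) p^N_i - v_i = ∑_{j ∈ N} p^N_j + |N| O^N`,
so it exists exactly when `(1 + |N|) p^N_i - v_i` does not depend on `i ∈ N`, which is the
potential condition with `v = φ + c`. Taking `c` uniform makes each `v_i` sum to one, and then the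
shock sums to zero because every `p^N_i` does.
-/

open Finset
open scoped Classical

noncomputable section

/-- The simplex Δ(X) of probability vectors on a finite set X. -/
def simplex (X : Type*) [Fintype X] : Set (X → ℝ) :=
  {v | (∀ x, 0 ≤ v x) ∧ (∑ x, v x) = 1}

/-- Cyclic constancy*: size-weighted peer effects sum to zero around every cycle of
influence. -/
def CyclicallyConstantStar {X A : Type*} [Fintype X]
    (𝒩 : Finset (Finset A)) (p : Finset A → A → X → ℝ) : Prop :=
  ∀ (K : ℕ) (ii jj : Fin (K + 1) → A) (Ns : Fin (K + 1) → Finset A),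
    (∀ k, Ns k ∈ 𝒩) → (∀ k, ii k ∈ Ns k) → (∀ k, jj k ∈ Ns k) →
    (∀ k, jj k = ii (k + 1)) →
    (∑ k, ((1 : ℝ) + (Ns k).card) • (p (Ns k) (ii k) - p (Ns k) (jj k))) = 0

namespace CyclicallyConstantStar

variable {X A : Type*}

def peerWeight (p : Finset A → A → X → ℝ) (N : Finset A) (i j : A) : X → ℝ :=
  ((1 : ℝ) + N.card) • (p N i - p N j)

variable {p : Finset A → A → X → ℝ} {𝒩 : Finset (Finset A)}

@[simp]
lemma peerWeight_self (N : Finset A) (i : A) : peerWeight p N i i = 0 := by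
  simp [peerWeight]

lemma peerWeight_swap (N : Finset A) (i j : A) : peerWeight p N j i = -peerWeight p N i j := by
  simp only [peerWeight, ← smul_neg, neg_sub]

section StarPotential

variable [DecidableEq A]

def starPotential (p : Finset A → A → X → ℝ) (istar j : A) : X → ℝ :=
  peerWeight p {istar, j} j istar

lemma exists_group_peerWeight_eq_starPotential {istar : A}
    (hrich : ∀ j : A, j ≠ istar → ({istar, j} : Finset A) ∈ 𝒩) {N : Finset A} (hN : N ∈ 𝒩)
    {j : A} (hj : j ∈ N) :
    ∃ G ∈ 𝒩, j ∈ G ∧ istar ∈ G ∧ peerWeight p G j istar = starPotential p istar j := by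
  by_cases hjs : j = istar
  · subst hjs
    exact ⟨N, hN, hj, hj, by simp [starPotential]⟩
  · exact ⟨{istar, j}, hrich j hjs, by simp, by simp, rfl⟩

end StarPotential

variable [Fintype X]

lemma sum_peerWeight_eq_zero {N : Finset A} {i j : A} (hi : p N i ∈ simplex X)
    (hj : p N j ∈ simplex X) : ∑ x, peerWeight p N i j x = 0 := by
  simp [peerWeight, ← Finset.mul_sum, Finset.sum_sub_distrib, hi.2, hj.2]

lemma peerWeight_triangle (hcc : CyclicallyConstantStar 𝒩 p) {N₁ N₂ N₃ : Finset A}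
    (h₁ : N₁ ∈ 𝒩) (h₂ : N₂ ∈ 𝒩) (h₃ : N₃ ∈ 𝒩) {i j k : A} (hi₁ : i ∈ N₁) (hj₁ : j ∈ N₁)
    (hj₂ : j ∈ N₂) (hk₂ : k ∈ N₂) (hk₃ : k ∈ N₃) (hi₃ : i ∈ N₃) :
    peerWeight p N₁ i j + peerWeight p N₂ j k + peerWeight p N₃ k i = 0 := by
  have h := hcc 2 ![i, j, k] ![j, k, i] ![N₁, N₂, N₃]
    (by intro n; fin_cases n <;> assumption) (by intro n; fin_cases n <;> assumption)
    (by intro n; fin_cases n <;> assumption) (by intro n; fin_cases n <;> rfl)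
  simpa [Fin.sum_univ_three, peerWeight, add_assoc] using h

lemma of_peerWeight_eq_sub (φ : A → X → ℝ)
    (hφ : ∀ N ∈ 𝒩, ∀ i ∈ N, ∀ j ∈ N, peerWeight p N i j = φ i - φ j) :
    CyclicallyConstantStar 𝒩 p := by
  intro K ii jj Ns hNs hii hjj hcyc
  change ∑ k, peerWeight p (Ns k) (ii k) (jj k) = 0
  calc ∑ k, peerWeight p (Ns k) (ii k) (jj k)
      = ∑ k, φ (ii k) - ∑ k, φ (ii (k + 1)) := by
        rw [← Finset.sum_sub_distrib]
        exact Finset.sum_congr rfl fun k _ => by rw [hφ _ (hNs k) _ (hii k) _ (hjj k), hcyc]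
    _ = 0 := by
        rw [Fintype.sum_equiv (Equiv.addRight 1) (fun k => φ (ii (k + 1))) (fun k => φ (ii k))
          (fun _ => rfl), sub_self]

variable [DecidableEq A]

lemma sum_starPotential_eq_zero {istar : A}
    (hrich : ∀ j : A, j ≠ istar → ({istar, j} : Finset A) ∈ 𝒩)
    (hp : ∀ N ∈ 𝒩, ∀ i ∈ N, p N i ∈ simplex X) (j : A) :
    ∑ x, starPotential p istar j x = 0 := by
  by_cases hj : j = istar
  · simp [starPotential, hj]
  · exact sum_peerWeight_eq_zero (hp _ (hrich j hj) _ (by simp)) (hp _ (hrich j hj) _ (by simp))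

lemma peerWeight_eq_starPotential_sub (hcc : CyclicallyConstantStar 𝒩 p) {istar : A}
    (hrich : ∀ j : A, j ≠ istar → ({istar, j} : Finset A) ∈ 𝒩) {N : Finset A} (hN : N ∈ 𝒩)
    {i j : A} (hi : i ∈ N) (hj : j ∈ N) :
    peerWeight p N i j = starPotential p istar i - starPotential p istar j := by
  obtain ⟨Gi, hGi, hiGi, hsGi, hwi⟩ :=
    exists_group_peerWeight_eq_starPotential (p := p) hrich hN hi
  obtain ⟨Gj, hGj, hjGj, hsGj, hwj⟩ := exists_group_peerWeight_eq_starPotential hrich hN hj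
  have h := hcc.peerWeight_triangle hN hGj hGi hi hj hjGj hsGj hsGi hiGi
  rw [hwj, peerWeight_swap Gi, hwi] at h
  rw [← sub_eq_zero, ← h]
  abel

end CyclicallyConstantStar

section ShockRepresentation

variable {A E : Type*} [DecidableEq A] [AddCommGroup E] [Module ℝ E] {N : Finset A}

lemma shock_representation_iff {q v : A → E} {i : A} (hi : i ∈ N) (O : E) :
    q i = ((N.card : ℝ))⁻¹ • v i + ((N.card : ℝ))⁻¹ • (∑ j ∈ N.erase i, q j) + O ↔
      ((1 : ℝ) + N.card) • q i - v i = ∑ j ∈ N, q j + (N.card : ℝ) • O := by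
  have hn : (N.card : ℝ) ≠ 0 := Nat.cast_ne_zero.mpr (Finset.card_ne_zero_of_mem hi)
  rw [sum_erase_eq_sub hi, ← (smul_right_injective E hn).eq_iff, smul_add, smul_add,
    smul_inv_smul₀ hn, smul_inv_smul₀ hn]
  constructor <;> intro h <;> linear_combination (norm := module) h

lemma smul_sub_eq_sub_of_shock_representation {q v : A → E} {i j : A} (hi : i ∈ N) (hj : j ∈ N)
    {O : E}
    (hrepi : q i = ((N.card : ℝ))⁻¹ • v i + ((N.card : ℝ))⁻¹ • (∑ k ∈ N.erase i, q k) + O)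
    (hrepj : q j = ((N.card : ℝ))⁻¹ • v j + ((N.card : ℝ))⁻¹ • (∑ k ∈ N.erase j, q k) + O) :
    ((1 : ℝ) + N.card) • (q i - q j) = v i - v j := by
  rw [shock_representation_iff hi] at hrepi
  rw [shock_representation_iff hj] at hrepj
  linear_combination (norm := module) hrepi - hrepj

lemma exists_shock_representation {X : Type*} [Fintype X] {q v : A → X → ℝ}
    (hq : ∀ i ∈ N, ∑ x, q i x = 1) (hv : ∀ i ∈ N, ∑ x, v i x = 1)
    (hw : ∀ i ∈ N, ∀ j ∈ N, ((1 : ℝ) + N.card) • (q i - q j) = v i - v j) :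
    ∃ O : X → ℝ, ∑ x, O x = 0 ∧ ∀ i ∈ N,
      q i = ((N.card : ℝ))⁻¹ • v i + ((N.card : ℝ))⁻¹ • (∑ j ∈ N.erase i, q j) + O := by
  rcases N.eq_empty_or_nonempty with rfl | ⟨i₀, hi₀⟩
  · exact ⟨0, by simp, by simp⟩
  have hn : (N.card : ℝ) ≠ 0 := Nat.cast_ne_zero.mpr (Finset.card_ne_zero_of_mem hi₀)
  refine ⟨(N.card : ℝ)⁻¹ • (((1 : ℝ) + N.card) • q i₀ - v i₀ - ∑ j ∈ N, q j), ?_, fun i hi => ?_⟩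
  · have hS : ∑ x, (∑ j ∈ N, q j) x = N.card := by
      simp only [Finset.sum_apply]
      rw [Finset.sum_comm, Finset.sum_congr rfl hq]
      simp
    simp only [Pi.smul_apply, Pi.sub_apply, smul_eq_mul, ← Finset.mul_sum, Finset.sum_sub_distrib,
      hq i₀ hi₀, hv i₀ hi₀, hS]
    ring
  · rw [shock_representation_iff hi, smul_inv_smul₀ hn]
    linear_combination (norm := module) hw i hi i₀ hi₀

end ShockRepresentation

open CyclicallyConstantStar in
theorem cyclic_constancy_star_iff_shock_representation_general
    {X A : Type*} [Fintype X] [DecidableEq A]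
    (hX : 2 ≤ Fintype.card X)
    (𝒩 : Finset (Finset A))
    (p : Finset A → A → X → ℝ) (hp : ∀ N ∈ 𝒩, ∀ i ∈ N, p N i ∈ simplex X)
    (istar : A) (hrich : ∀ j : A, j ≠ istar → ({istar, j} : Finset A) ∈ 𝒩) :
    CyclicallyConstantStar 𝒩 p ↔
      ∃ (v : A → X → ℝ) (O : Finset A → X → ℝ),
        (∀ i : A, (∑ x, v i x) = 1) ∧
        (∀ N ∈ 𝒩, (∑ x, O N x) = 0) ∧
        ∀ N ∈ 𝒩, ∀ i ∈ N,
          p N i = ((N.card : ℝ))⁻¹ • v i +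
            ((N.card : ℝ))⁻¹ • (∑ j ∈ N.erase i, p N j) + O N := by
  constructor
  · intro hcc
    have hXne : (Fintype.card X : ℝ) ≠ 0 := Nat.cast_ne_zero.mpr (by omega)
    let v : A → X → ℝ := fun i => starPotential p istar i + fun _ => (Fintype.card X : ℝ)⁻¹
    have hv : ∀ i, ∑ x, v i x = 1 := fun i => by
      simp [v, Finset.sum_add_distrib, sum_starPotential_eq_zero hrich hp, hXne]
    choose! O hO using fun N (hN : N ∈ 𝒩) =>
      exists_shock_representation (fun i hi => (hp N hN i hi).2) (fun i _ => hv i)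
        fun i hi j hj => (hcc.peerWeight_eq_starPotential_sub hrich hN hi hj).trans
          (add_sub_add_right_eq_sub _ _ _).symm
    exact ⟨v, O, hv, fun N hN => (hO N hN).1, fun N hN => (hO N hN).2⟩
  · rintro ⟨v, O, -, -, hrep⟩
    exact of_peerWeight_eq_sub v fun N hN i hi j hj =>
      smul_sub_eq_sub_of_shock_representation hi hj (hrep N hN i hi) (hrep N hN j hj)

/-- Proposition E.1: under the richness condition that some agent i* forms a binary
group with every other agent, cyclic constancy* is equivalent to a uniform
linear-in-means representation with group-specific shocks. -/
theorem cyclic_constancy_star_iff_shock_representation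
    {X A : Type*} [Fintype X] [Fintype A] [DecidableEq A]
    (hX : 2 ≤ Fintype.card X) (hA : 2 ≤ Fintype.card A)
    (𝒩 : Finset (Finset A)) (h𝒩 : 𝒩.Nonempty) (h𝒩' : ∀ N ∈ 𝒩, N.Nonempty)
    (p : Finset A → A → X → ℝ) (hp : ∀ N ∈ 𝒩, ∀ i ∈ N, p N i ∈ simplex X)
    (istar : A) (hrich : ∀ j : A, j ≠ istar → ({istar, j} : Finset A) ∈ 𝒩) :
    CyclicallyConstantStar 𝒩 p ↔
      ∃ (v : A → X → ℝ) (O : Finset A → X → ℝ),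
        (∀ i : A, (∑ x, v i x) = 1) ∧
        (∀ N ∈ 𝒩, (∑ x, O N x) = 0) ∧
        ∀ N ∈ 𝒩, ∀ i ∈ N,
          p N i = ((N.card : ℝ))⁻¹ • v i +
            ((N.card : ℝ))⁻¹ • (∑ j ∈ N.erase i, p N j) + O N :=
  cyclic_constancy_star_iff_shock_representation_general hX 𝒩 p hp istar hrich
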